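/- Fix μ, x₀ ∈ ℂ. Let V ⊆ ℂ × ℂ be open such that for every (x,t) ∈ V one has x ≠ 0, x ≠ 1 and x ≠ t. Let Φ : ℂ × ℂ → Matrix (Fin 2) (Fin 2) ℂ be twice continuously ℂ-differentiable on V with Φ(x,t) invertible for all (x,t) ∈ V, satisfying ∂Φ/∂x(x,t) = ![![0, 1],![−μ/(x·(x−1)·(x−t)), 0]] · Φ(x,t) on V and Φ(x₀,t) equal to the identity matrix for every t with (x₀,t) ∈ V. Fix t ∈ ℂ and let γ : [0,1] → ℂ be continuously differentiable with γ(0) = x₀ and (γ(r), t) ∈ V for all r ∈ [0,1]. Then ∂Φ/∂t(γ(1),t) = −μ · Φ(γ(1),t) · ∫₀¹ Λ(γ(r)) · γ'(r) / (γ(r)·(γ(r)−1)·(γ(r)−t)²) dr, where Λ(y) = Φ(y,t)⁻¹ · σ₋ · Φ(y,t). -/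

import Mathlib

/-- Entrywise complex partial derivative with respect to the first variable of a
matrix-valued function of two complex variables. -/
noncomputable def pdx (F : ℂ × ℂ → Matrix (Fin 2) (Fin 2) ℂ) (p : ℂ × ℂ) :
    Matrix (Fin 2) (Fin 2) ℂ :=
  Matrix.of fun i j => deriv (fun z => F (z, p.2) i j) p.1

/-- Entrywise complex partial derivative with respect to the second variable of a
matrix-valued function of two complex variables. -/
noncomputable def pds (F : ℂ × ℂ → Matrix (Fin 2) (Fin 2) ℂ) (p : ℂ × ℂ) :
    Matrix (Fin 2) (Fin 2) ℂ :=
  Matrix.of fun i j => deriv (fun z => F (p.1, z) i j) p.2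

/-- The matrix σ₋ = ![![0,0],![1,0]]. -/
def sigmaMinus : Matrix (Fin 2) (Fin 2) ℂ := !![0, 0; 1, 0]

/-!
Write `A(x, t)` for the coefficient matrix of the system and `Ψ = ∂ₜΦ`. Differentiating
`∂ₓΦ = A Φ` in `t` (the mixed partials of the `C²` function `Φ` commute) gives
`∂ₓΨ = (∂ₜA) Φ + A Ψ` with `∂ₜA = -μ / (x(x-1)(x-t)²) • σ₋`, so in the `x`-derivative of
`Φ⁻¹ Ψ` the two `A`-terms cancel and only `Φ⁻¹ (∂ₜA) Φ` survives. Since `Φ(x₀, ·) ≡ 1`, `Φ⁻¹ Ψ`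
vanishes at `x₀`, and integrating its derivative along `γ` gives `Φ⁻¹ Ψ` at `γ(1)`.
-/

open Set Filter Topology
-- The `L∞` operator norm makes square matrices a normed algebra, for the product rule and the
-- derivative of `Ring.inverse`.
open scoped Matrix.Norms.Operator

namespace Matrix

variable {𝕜 : Type*} [NontriviallyNormedField 𝕜] [CompleteSpace 𝕜] {m n : Type*}
  [Fintype m] [Fintype n]

noncomputable def toPiCLE : Matrix m n 𝕜 ≃L[𝕜] (m → n → 𝕜) :=
  (ofLinearEquiv 𝕜).symm.toContinuousLinearEquiv

theorem hasDerivAt_iff_forall_entry {f : 𝕜 → Matrix m n 𝕜} {f' : Matrix m n 𝕜} {x : 𝕜} :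
    HasDerivAt f f' x ↔ ∀ i j, HasDerivAt (fun y => f y i j) (f' i j) x := by
  refine ⟨fun h => ?_, fun h => ?_⟩
  · have := toPiCLE.hasFDerivAt.comp_hasDerivAt x h
    exact fun i j => hasDerivAt_pi.1 (hasDerivAt_pi.1 this i) j
  · have h' : HasDerivAt (fun y => toPiCLE (f y)) (toPiCLE f') x :=
      hasDerivAt_pi.2 fun i => hasDerivAt_pi.2 fun j => h i j
    exact toPiCLE.symm.hasFDerivAt.comp_hasDerivAt x h'

theorem contDiffOn_iff_forall_entry {E : Type*} [NormedAddCommGroup E] [NormedSpace 𝕜 E]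
    {f : E → Matrix m n 𝕜} {s : Set E} {k : WithTop ℕ∞} :
    ContDiffOn 𝕜 k f s ↔ ∀ i j, ContDiffOn 𝕜 k (fun x => f x i j) s :=
  (toPiCLE.comp_contDiffOn_iff (f := f)).symm.trans
    (contDiffOn_pi.trans (forall_congr' fun _ => contDiffOn_pi))

end Matrix

section NormedRing

variable {𝕜 R : Type*} [NontriviallyNormedField 𝕜] [NormedRing R] [NormedAlgebra 𝕜 R]
  [HasSummableGeomSeries R]

theorem HasDerivAt.ringInverse_mul_of_linear_system {P Q : 𝕜 → R} {A B : R} {x : 𝕜}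
    (hPx : IsUnit (P x)) (hP : HasDerivAt P (A * P x) x)
    (hQ : HasDerivAt Q (B * P x + A * Q x) x) :
    HasDerivAt (fun y => Ring.inverse (P y) * Q y) (Ring.inverse (P x) * B * P x) x := by
  obtain ⟨u, hu⟩ := hPx
  have hPu : P x * Ring.inverse (P x) = 1 := Ring.mul_inverse_cancel _ ⟨u, hu⟩
  have hinv : HasDerivAt (fun y => Ring.inverse (P y))
      (-(Ring.inverse (P x) * (A * P x) * Ring.inverse (P x))) x := by
    have hl : HasFDerivAt Ring.inverse
        (-ContinuousLinearMap.mulLeftRight 𝕜 R (Ring.inverse (P x)) (Ring.inverse (P x)))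
        (P x) := by
      simpa only [← hu, Ring.inverse_unit] using hasFDerivAt_ringInverse (𝕜 := 𝕜) u
    have h := hl.comp_hasDerivAt x hP
    simp only [neg_apply, ContinuousLinearMap.mulLeftRight_apply] at h
    exact h
  convert hinv.fun_mul hQ using 1
  rw [mul_assoc _ (A * P x), mul_assoc A, hPu, mul_one]
  simp only [neg_mul, mul_add, mul_assoc]
  abel

end NormedRing

section Slices

variable {𝕜 E : Type*} [NontriviallyNormedField 𝕜] [NormedAddCommGroup E] [NormedSpace 𝕜 E]
  {F : 𝕜 × 𝕜 → E} {F' : 𝕜 × 𝕜 →L[𝕜] E} {q : 𝕜 × 𝕜}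

theorem HasFDerivAt.hasDerivAt_fst_slice (hF : HasFDerivAt F F' q) :
    HasDerivAt (fun x => F (x, q.2)) (F' (1, 0)) q.1 :=
  hF.comp_hasDerivAt q.1 ((hasDerivAt_id q.1).prodMk (hasDerivAt_const q.1 q.2))

theorem HasFDerivAt.hasDerivAt_snd_slice (hF : HasFDerivAt F F' q) :
    HasDerivAt (fun s => F (q.1, s)) (F' (0, 1)) q.2 :=
  hF.comp_hasDerivAt q.2 ((hasDerivAt_const q.2 q.1).prodMk (hasDerivAt_id q.2))

end Slices

section MixedPartials

variable {𝕜 E : Type*} [RCLike 𝕜] [NormedAddCommGroup E] [NormedSpace 𝕜 E]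
  {F : 𝕜 × 𝕜 → E} {q : 𝕜 × 𝕜}

-- Symmetry of mixed partials, `∂ₓ ∂ₛ F = ∂ₛ ∂ₓ F`, with `∂ₓ F (·, s)` given as `G s`.
theorem ContDiffAt.hasDerivAt_deriv_snd_slice (hF : ContDiffAt 𝕜 2 F q) {G : 𝕜 → E} {G' : E}
    (hG : ∀ᶠ s in 𝓝 q.2, HasDerivAt (fun x => F (x, s)) (G s) q.1) (hG' : HasDerivAt G G' q.2) :
    HasDerivAt (fun x => deriv (fun s => F (x, s)) q.2) G' q.1 := by
  have hDF : ∀ᶠ p in 𝓝 q, HasFDerivAt F (fderiv 𝕜 F p) p :=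
    (hF.eventually (by simp)).mono fun p hp => (hp.differentiableAt (by simp)).hasFDerivAt
  have hD2F : HasFDerivAt (fderiv 𝕜 F) (fderiv 𝕜 (fderiv 𝕜 F) q) q :=
    ((hF.fderiv_right le_rfl).differentiableAt one_ne_zero).hasFDerivAt
  have hfst : Tendsto (fun x => (x, q.2)) (𝓝 q.1) (𝓝 q) :=
    (continuous_id.prodMk continuous_const).tendsto' _ _ rfl
  have hsnd : Tendsto (fun s => (q.1, s)) (𝓝 q.2) (𝓝 q) :=
    (continuous_const.prodMk continuous_id).tendsto' _ _ rfl
  have hGF : G =ᶠ[𝓝 q.2] fun s => fderiv 𝕜 F (q.1, s) (1, 0) := by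
    filter_upwards [hG, hsnd.eventually hDF] with s hGs hFs
    exact hGs.unique hFs.hasDerivAt_fst_slice
  have hG'F : G' = fderiv 𝕜 (fderiv 𝕜 F) q (1, 0) (0, 1) := by
    rw [← (hF.isSymmSndFDerivAt (by simp)).eq]
    refine hG'.unique (HasDerivAt.congr_of_eventuallyEq ?_ hGF)
    simpa using hD2F.hasDerivAt_snd_slice.clm_apply (hasDerivAt_const q.2 ((1, 0) : 𝕜 × 𝕜))
  have hFsnd : (fun x => deriv (fun s => F (x, s)) q.2) =ᶠ[𝓝 q.1]
      fun x => fderiv 𝕜 F (x, q.2) (0, 1) := by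
    filter_upwards [hfst.eventually hDF] with x hFx
    exact hFx.hasDerivAt_snd_slice.deriv
  rw [hG'F]
  refine HasDerivAt.congr_of_eventuallyEq ?_ hFsnd
  simpa using hD2F.hasDerivAt_fst_slice.clm_apply (hasDerivAt_const q.1 ((0, 1) : 𝕜 × 𝕜))

end MixedPartials

theorem integral_derivWithin_smul_comp_eq_sub_of_hasDerivAt {E : Type*} [NormedAddCommGroup E]
    [NormedSpace ℂ E] [CompleteSpace E] {g g' : ℂ → E} {U : Set ℂ}
    (hg : ∀ z ∈ U, HasDerivAt g (g' z) z) (hg' : ContinuousOn g' U)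
    {γ : ℝ → ℂ} {a b : ℝ} (hab : a ≤ b) (hγ : ContDiffOn ℝ 1 γ (Icc a b))
    (hγU : MapsTo γ (Icc a b) U) :
    ∫ r in a..b, derivWithin γ (Icc a b) r • g' (γ r) = g (γ b) - g (γ a) := by
  rcases hab.eq_or_lt with rfl | hab
  · simp
  have hgU : ContinuousOn g U := fun z hz => (hg z hz).continuousAt.continuousWithinAt
  refine intervalIntegral.integral_eq_sub_of_hasDerivAt_of_le hab.le
    (hgU.comp hγ.continuousOn hγU) (fun r hr => ?_) ?_
  · have hr' : Icc a b ∈ 𝓝 r := Icc_mem_nhds hr.1 hr.2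
    have hγr : HasDerivAt γ (derivWithin γ (Icc a b) r) r := by
      rw [derivWithin_of_mem_nhds hr']
      exact ((hγ.contDiffAt hr').differentiableAt one_ne_zero).hasDerivAt
    exact (hg _ (hγU (Ioo_subset_Icc_self hr))).scomp r hγr
  · refine ContinuousOn.intervalIntegrable ?_
    rw [uIcc_of_le hab.le]
    exact (hγ.continuousOn_derivWithin (uniqueDiffOn_Icc hab) le_rfl).smul
      (hg'.comp hγ.continuousOn hγU)

section EntrywisePartials

variable {F : ℂ × ℂ → Matrix (Fin 2) (Fin 2) ℂ} {p : ℂ × ℂ}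

theorem hasDerivAt_fst_slice_pdx (hF : DifferentiableAt ℂ F p) :
    HasDerivAt (fun x => F (x, p.2)) (pdx F p) p.1 := by
  have h := hF.hasFDerivAt.hasDerivAt_fst_slice
  have hpdx : pdx F p = fderiv ℂ F p (1, 0) := by
    ext i j
    exact (Matrix.hasDerivAt_iff_forall_entry.1 h i j).deriv
  rwa [hpdx]

theorem hasDerivAt_snd_slice_pds (hF : DifferentiableAt ℂ F p) :
    HasDerivAt (fun s => F (p.1, s)) (pds F p) p.2 := by
  have h := hF.hasFDerivAt.hasDerivAt_snd_slice
  have hpds : pds F p = fderiv ℂ F p (0, 1) := by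
    ext i j
    exact (Matrix.hasDerivAt_iff_forall_entry.1 h i j).deriv
  rwa [hpds]

theorem pds_eq_zero_of_eventually_eq {c : Matrix (Fin 2) (Fin 2) ℂ}
    (h : ∀ᶠ s in 𝓝 p.2, F (p.1, s) = c) : pds F p = 0 := by
  ext i j
  have hij : (fun s => F (p.1, s) i j) =ᶠ[𝓝 p.2] fun _ => c i j :=
    h.mono fun s hs => congrArg (fun M : Matrix (Fin 2) (Fin 2) ℂ => M i j) hs
  simp only [pds, Matrix.of_apply, Matrix.zero_apply, hij.deriv_eq, deriv_const]

end EntrywisePartials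

noncomputable def heunMatrix (μ : ℂ) (p : ℂ × ℂ) : Matrix (Fin 2) (Fin 2) ℂ :=
  !![0, 1; -μ / (p.1 * (p.1 - 1) * (p.1 - p.2)), 0]

theorem hasDerivAt_heunMatrix_snd {μ x t : ℂ} (hxt : x ≠ t) :
    HasDerivAt (fun s => heunMatrix μ (x, s))
      ((-μ / (x * (x - 1) * (x - t) ^ 2)) • sigmaMinus) t := by
  have hc : HasDerivAt (fun s => -μ / (x * (x - 1) * (x - s)))
      (-μ / (x * (x - 1) * (x - t) ^ 2)) t := by
    have h : HasDerivAt (fun s => (x - s)⁻¹) ((x - t) ^ 2)⁻¹ t := by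
      simpa using ((hasDerivAt_id t).const_sub x).fun_inv (sub_ne_zero.2 hxt)
    have hfun : (fun s => -μ / (x * (x - 1) * (x - s)))
        = fun s => -μ / (x * (x - 1)) * (x - s)⁻¹ := by
      funext s
      rw [← div_div, div_eq_mul_inv]
    rw [hfun]
    exact (h.const_mul _).congr_deriv (by rw [← div_eq_mul_inv, div_div])
  rw [Matrix.hasDerivAt_iff_forall_entry]
  intro i j
  fin_cases i <;> fin_cases j <;> simp [heunMatrix, sigmaMinus, hasDerivAt_const, hc]

noncomputable def heunVariation (μ t : ℂ) (Φ : ℂ × ℂ → Matrix (Fin 2) (Fin 2) ℂ) (z : ℂ) :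
    Matrix (Fin 2) (Fin 2) ℂ :=
  (-μ / (z * (z - 1) * (z - t) ^ 2)) • ((Φ (z, t))⁻¹ * sigmaMinus * Φ (z, t))

section HeunSystem

variable {μ : ℂ} {V : Set (ℂ × ℂ)} {Φ : ℂ × ℂ → Matrix (Fin 2) (Fin 2) ℂ} {p : ℂ × ℂ}

theorem hasDerivAt_pds_fst_slice_of_heun (hV : IsOpen V) (hΦ : ContDiffOn ℂ 2 Φ V)
    (hVt : ∀ q ∈ V, q.1 ≠ q.2) (heq : ∀ q ∈ V, pdx Φ q = heunMatrix μ q * Φ q) (hp : p ∈ V) :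
    HasDerivAt (fun x => pds Φ (x, p.2))
      ((-μ / (p.1 * (p.1 - 1) * (p.1 - p.2) ^ 2)) • sigmaMinus * Φ p
        + heunMatrix μ p * pds Φ p) p.1 := by
  have hdiff : ∀ q ∈ V, DifferentiableAt ℂ Φ q := fun q hq =>
    (hΦ.differentiableOn (by simp) q hq).differentiableAt (hV.mem_nhds hq)
  have hfst : ∀ᶠ x in 𝓝 p.1, (x, p.2) ∈ V :=
    (continuous_id.prodMk continuous_const).continuousAt.preimage_mem_nhds (hV.mem_nhds hp)
  have hsnd : ∀ᶠ s in 𝓝 p.2, (p.1, s) ∈ V :=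
    (continuous_const.prodMk continuous_id).continuousAt.preimage_mem_nhds (hV.mem_nhds hp)
  refine ((hΦ.contDiffAt (hV.mem_nhds hp)).hasDerivAt_deriv_snd_slice
    (G := fun s => heunMatrix μ (p.1, s) * Φ (p.1, s)) ?_ ?_).congr_of_eventuallyEq ?_
  · filter_upwards [hsnd] with s hs
    exact heq _ hs ▸ hasDerivAt_fst_slice_pdx (hdiff _ hs)
  · exact (hasDerivAt_heunMatrix_snd (hVt p hp)).mul (hasDerivAt_snd_slice_pds (hdiff p hp))
  · filter_upwards [hfst] with x hx
    exact (hasDerivAt_snd_slice_pds (hdiff _ hx)).deriv.symm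

theorem hasDerivAt_inv_mul_pds_of_heun (hV : IsOpen V) (hΦ : ContDiffOn ℂ 2 Φ V)
    (hVt : ∀ q ∈ V, q.1 ≠ q.2) (hinv : ∀ q ∈ V, IsUnit (Φ q))
    (heq : ∀ q ∈ V, pdx Φ q = heunMatrix μ q * Φ q) (hp : p ∈ V) :
    HasDerivAt (fun x => (Φ (x, p.2))⁻¹ * pds Φ (x, p.2)) (heunVariation μ p.2 Φ p.1) p.1 := by
  have h := HasDerivAt.ringInverse_mul_of_linear_system (P := fun x => Φ (x, p.2)) (hinv p hp)
    (heq p hp ▸ hasDerivAt_fst_slice_pdx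
      ((hΦ.differentiableOn (by simp) p hp).differentiableAt (hV.mem_nhds hp)))
    (hasDerivAt_pds_fst_slice_of_heun hV hΦ hVt heq hp)
  simp only [Matrix.nonsing_inv_eq_ringInverse]
  exact h.congr_deriv (by simp only [heunVariation, Matrix.nonsing_inv_eq_ringInverse,
    Matrix.mul_smul, Matrix.smul_mul])

theorem continuousOn_slice_conj (hΦ : ContinuousOn Φ V) (hinv : ∀ q ∈ V, IsUnit (Φ q))
    (M : Matrix (Fin 2) (Fin 2) ℂ) (t : ℂ) :
    ContinuousOn (fun z => (Φ (z, t))⁻¹ * M * Φ (z, t)) {z | (z, t) ∈ V} := by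
  have hslice : ContinuousOn (fun z => Φ (z, t)) {z | (z, t) ∈ V} :=
    hΦ.comp (continuous_id.prodMk continuous_const).continuousOn fun _ hz => hz
  refine ContinuousOn.mul (ContinuousOn.mul (fun z hz => ?_) continuousOn_const) hslice
  have hdet : IsUnit (Φ (z, t)).det := (Matrix.isUnit_iff_isUnit_det _).1 (hinv _ hz)
  exact ContinuousAt.comp_continuousWithinAt (f := fun z => Φ (z, t))
    (continuousAt_matrix_inv _ (NormedRing.inverse_continuousAt hdet.unit)) (hslice z hz)

theorem continuousOn_heunVariation (hVreg : ∀ q ∈ V, q.1 ≠ 0 ∧ q.1 ≠ 1 ∧ q.1 ≠ q.2)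
    (hΦ : ContinuousOn Φ V) (hinv : ∀ q ∈ V, IsUnit (Φ q)) (t : ℂ) :
    ContinuousOn (heunVariation μ t Φ) {z | (z, t) ∈ V} := by
  have hden : ContinuousOn (fun z : ℂ => z * (z - 1) * (z - t) ^ 2) {z | (z, t) ∈ V} := by
    fun_prop
  refine ((continuousOn_const (c := -μ)).div hden fun z hz => ?_).smul
    (continuousOn_slice_conj hΦ hinv sigmaMinus t)
  obtain ⟨h0, h1, ht⟩ := hVreg _ hz
  exact mul_ne_zero (mul_ne_zero h0 (sub_ne_zero.2 h1)) (pow_ne_zero _ (sub_ne_zero.2 ht))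

end HeunSystem

/-- Variational formula for the `t`-dependence of the normalized
solution `Φ` (with `Φ(x₀,t) = I`) of the Wronskian form of the Heun-type equation
`φ'' + μ/(x(x−1)(x−t))·φ = 0`:
`∂Φ/∂t(γ(1),t) = −μ·Φ(γ(1),t)·∫₀¹ Λ(γ(r))·γ'(r)/(γ(r)(γ(r)−1)(γ(r)−t)²) dr`, with
`Λ(y) = Φ(y,t)⁻¹·σ₋·Φ(y,t)`. -/
theorem heun_variation_in_t
    (μ x₀ : ℂ) (V : Set (ℂ × ℂ)) (hV : IsOpen V)
    (hVreg : ∀ p ∈ V, p.1 ≠ 0 ∧ p.1 ≠ 1 ∧ p.1 ≠ p.2)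
    (Φ : ℂ × ℂ → Matrix (Fin 2) (Fin 2) ℂ)
    (hΦ : ∀ i j, ContDiffOn ℂ 2 (fun p => Φ p i j) V)
    (hinv : ∀ p ∈ V, IsUnit (Φ p))
    (heq : ∀ p ∈ V,
      pdx Φ p = !![0, 1; -μ / (p.1 * (p.1 - 1) * (p.1 - p.2)), 0] * Φ p)
    (hnorm : ∀ t : ℂ, (x₀, t) ∈ V → Φ (x₀, t) = 1)
    (t : ℂ) (γ : ℝ → ℂ)
    (hγ : ContDiffOn ℝ 1 γ (Set.Icc 0 1))
    (hγ0 : γ 0 = x₀)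
    (hγV : ∀ r ∈ Set.Icc (0 : ℝ) 1, (γ r, t) ∈ V) :
    pds Φ (γ 1, t) =
      (-μ) • (Φ (γ 1, t) *
        Matrix.of fun i j =>
          ∫ r in (0 : ℝ)..1,
            ((Φ (γ r, t))⁻¹ * sigmaMinus * Φ (γ r, t)) i j *
              derivWithin γ (Set.Icc 0 1) r /
                (γ r * (γ r - 1) * (γ r - t) ^ 2)) := by
  have hΦV : ContDiffOn ℂ 2 Φ V := Matrix.contDiffOn_iff_forall_entry.2 hΦ
  have heq' : ∀ q ∈ V, pdx Φ q = heunMatrix μ q * Φ q := heq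
  have hg : ∀ z ∈ {z | (z, t) ∈ V}, HasDerivAt (fun x => (Φ (x, t))⁻¹ * pds Φ (x, t))
      (heunVariation μ t Φ z) z := fun z hz =>
    hasDerivAt_inv_mul_pds_of_heun (p := (z, t)) hV hΦV (fun q hq => (hVreg q hq).2.2) hinv heq' hz
  have hx₀ : ∀ᶠ s in 𝓝 t, (x₀, s) ∈ V :=
    (continuous_const.prodMk continuous_id).continuousAt.preimage_mem_nhds
      (hV.mem_nhds (hγ0 ▸ hγV 0 ⟨le_rfl, zero_le_one⟩))
  have hpds₀ : pds Φ (x₀, t) = 0 := pds_eq_zero_of_eventually_eq (p := (x₀, t)) (hx₀.mono hnorm)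
  have hentry : ∀ i j, ∫ r in (0 : ℝ)..1, derivWithin γ (Icc 0 1) r * heunVariation μ t Φ (γ r) i j
      = ((Φ (γ 1, t))⁻¹ * pds Φ (γ 1, t)) i j := fun i j => by
    simpa [hγ0, hpds₀] using integral_derivWithin_smul_comp_eq_sub_of_hasDerivAt
      (fun z hz => Matrix.hasDerivAt_iff_forall_entry.1 (hg z hz) i j)
      ((continuous_apply_apply i j).comp_continuousOn
        (continuousOn_heunVariation hVreg hΦV.continuousOn hinv t)) zero_le_one hγ hγV
  have hdet : IsUnit (Φ (γ 1, t)).det :=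
    (Matrix.isUnit_iff_isUnit_det _).1 (hinv _ (hγV 1 ⟨zero_le_one, le_rfl⟩))
  rw [← Matrix.mul_nonsing_inv_cancel_left _ (pds Φ (γ 1, t)) hdet, ← Matrix.mul_smul]
  congr 1
  ext i j
  rw [← hentry, Matrix.smul_apply, Matrix.of_apply, smul_eq_mul,
    ← intervalIntegral.integral_const_mul]
  congr 1
  funext r
  simp only [heunVariation, Matrix.smul_apply, smul_eq_mul]
  ring
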